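/- Let u : ℝ × ℝ³ → ℝ³, p : ℝ × ℝ³ → ℝ, and F : ℝ × ℝ³ → ℝ^{3×3} be smooth and assume that on all of ℝ × ℝ³: (i) the momentum equation ∂_t u_i + Σ_{m=1}^{3} u_m ∂_m u_i + ∂_i p = Σ_{j=1}^{3} Σ_{m=1}^{3} F_{mj} ∂_m F_{ij} holds for i = 1,2,3; and (ii) the deformation equation ∂_t F_{ij} + Σ_{m=1}^{3} u_m ∂_m F_{ij} = Σ_{m=1}^{3} F_{mj} ∂_m u_i holds for all i, j. Then, with D_t = ∂_t + Σ_{m=1}^{3} u_m ∂_m, for i = 1,2,3 and at every point of ℝ × ℝ³: D_t(D_t u_i) + D_t(∂_i p) = Σ_{j=1}^{3} Σ_{m=1}^{3} F_{mj} ∂_m ( Σ_{k=1}^{3} F_{kj} ∂_k u_i ). -/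

import Mathlib

open scoped BigOperators

noncomputable section

/-! Partial derivatives of curried functions of several real variables. -/

/-- derivative in the 1st of 2 arguments -/
def d1_2 (g : ℝ → ℝ → ℝ) : ℝ → ℝ → ℝ := fun a b => deriv (fun s => g s b) a
/-- derivative in the 2nd of 2 arguments -/
def d2_2 (g : ℝ → ℝ → ℝ) : ℝ → ℝ → ℝ := fun a b => deriv (fun s => g a s) b

/-- derivative in the 1st of 3 arguments -/
def d1_3 (g : ℝ → ℝ → ℝ → ℝ) : ℝ → ℝ → ℝ → ℝ := fun a b c => deriv (fun s => g s b c) a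
/-- derivative in the 2nd of 3 arguments -/
def d2_3 (g : ℝ → ℝ → ℝ → ℝ) : ℝ → ℝ → ℝ → ℝ := fun a b c => deriv (fun s => g a s c) b
/-- derivative in the 3rd of 3 arguments -/
def d3_3 (g : ℝ → ℝ → ℝ → ℝ) : ℝ → ℝ → ℝ → ℝ := fun a b c => deriv (fun s => g a b s) c

/-- derivative in the 1st of 4 arguments -/
def d1_4 (g : ℝ → ℝ → ℝ → ℝ → ℝ) : ℝ → ℝ → ℝ → ℝ → ℝ := fun a b c e => deriv (fun s => g s b c e) a
/-- derivative in the 2nd of 4 arguments -/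
def d2_4 (g : ℝ → ℝ → ℝ → ℝ → ℝ) : ℝ → ℝ → ℝ → ℝ → ℝ := fun a b c e => deriv (fun s => g a s c e) b
/-- derivative in the 3rd of 4 arguments -/
def d3_4 (g : ℝ → ℝ → ℝ → ℝ → ℝ) : ℝ → ℝ → ℝ → ℝ → ℝ := fun a b c e => deriv (fun s => g a b s e) c
/-- derivative in the 4th of 4 arguments -/
def d4_4 (g : ℝ → ℝ → ℝ → ℝ → ℝ) : ℝ → ℝ → ℝ → ℝ → ℝ := fun a b c e => deriv (fun s => g a b c s) e

/-- spatial derivatives ∂₁, ∂₂, ∂₃ of v(t, x₁, x₂, x₃) -/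
def dsp : Fin 3 → (ℝ → ℝ → ℝ → ℝ → ℝ) → (ℝ → ℝ → ℝ → ℝ → ℝ) := ![d2_4, d3_4, d4_4]
/-- tangential derivatives ∂₁, ∂₂ of g(t, x₁, x₂) -/
def dtg : Fin 2 → (ℝ → ℝ → ℝ → ℝ) → (ℝ → ℝ → ℝ → ℝ) := ![d2_3, d3_3]
/-- spatial derivatives ∂₁, ∂₂, ∂₃ of v(x₁, x₂, x₃) -/
def dsp3 : Fin 3 → (ℝ → ℝ → ℝ → ℝ) → (ℝ → ℝ → ℝ → ℝ) := ![d1_3, d2_3, d3_3]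
/-- derivatives ∂₁, ∂₂ of g(x₁, x₂) -/
def dtg2 : Fin 2 → (ℝ → ℝ → ℝ) → (ℝ → ℝ → ℝ) := ![d1_2, d2_2]

/-- C^∞ smoothness for a function of 2 real variables -/
def smooth2 (g : ℝ → ℝ → ℝ) : Prop :=
  ContDiff ℝ (⊤ : ℕ∞) (fun p : ℝ × ℝ => g p.1 p.2)
/-- C^∞ smoothness for a function of 3 real variables -/
def smooth3 (g : ℝ → ℝ → ℝ → ℝ) : Prop :=
  ContDiff ℝ (⊤ : ℕ∞) (fun p : ℝ × ℝ × ℝ => g p.1 p.2.1 p.2.2)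
/-- C^∞ smoothness for a function of 4 real variables -/
def smooth4 (g : ℝ → ℝ → ℝ → ℝ → ℝ) : Prop :=
  ContDiff ℝ (⊤ : ℕ∞) (fun p : ℝ × ℝ × ℝ × ℝ => g p.1 p.2.1 p.2.2.1 p.2.2.2)

/-- trace of v(t,x₁,x₂,x₃) on the graph x₃ = f(t,x₁,x₂) -/
def tr (v : ℝ → ℝ → ℝ → ℝ → ℝ) (f : ℝ → ℝ → ℝ → ℝ) : ℝ → ℝ → ℝ → ℝ :=
  fun t x y => v t x y (f t x y)
/-- trace of v(x₁,x₂,x₃) on the graph x₃ = f(x₁,x₂) -/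
def tr2 (v : ℝ → ℝ → ℝ → ℝ) (f : ℝ → ℝ → ℝ) : ℝ → ℝ → ℝ :=
  fun x y => v x y (f x y)

/-- the (non-normalized) outward normal N_f = (−∂₁f, −∂₂f, 1) of the graph of f(t,·) -/
def Nf (f : ℝ → ℝ → ℝ → ℝ) : Fin 3 → ℝ → ℝ → ℝ → ℝ :=
  ![fun t x y => -(d2_3 f t x y), fun t x y => -(d3_3 f t x y), fun _ _ _ => 1]
/-- the (non-normalized) outward normal of the graph of a time-independent f -/
def Nf2 (f : ℝ → ℝ → ℝ) : Fin 3 → ℝ → ℝ → ℝ :=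
  ![fun x y => -(d1_2 f x y), fun x y => -(d2_2 f x y), fun _ _ => 1]

/-- the interface material derivative D_t g = ∂_t g + u̲₁ ∂₁ g + u̲₂ ∂₂ g -/
def Dt (u : Fin 3 → ℝ → ℝ → ℝ → ℝ → ℝ) (f : ℝ → ℝ → ℝ → ℝ)
    (g : ℝ → ℝ → ℝ → ℝ) : ℝ → ℝ → ℝ → ℝ :=
  fun t x y => d1_3 g t x y + tr (u 0) f t x y * d2_3 g t x y + tr (u 1) f t x y * d3_3 g t x y

/-- the material derivative D_t g = ∂_t g + u₁ ∂₁ g + u₂ ∂₂ g for given coefficients u₁,u₂ on ℝ×ℝ² -/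
def Dt2 (u : Fin 2 → ℝ → ℝ → ℝ → ℝ) (g : ℝ → ℝ → ℝ → ℝ) : ℝ → ℝ → ℝ → ℝ :=
  fun t x y => d1_3 g t x y + u 0 t x y * d2_3 g t x y + u 1 t x y * d3_3 g t x y

/-- the tangential deformation derivative D_{F_k} g = F̲₁ₖ ∂₁ g + F̲₂ₖ ∂₂ g -/
def DF (F : Fin 3 → Fin 3 → ℝ → ℝ → ℝ → ℝ → ℝ) (f : ℝ → ℝ → ℝ → ℝ) (k : Fin 3)
    (g : ℝ → ℝ → ℝ → ℝ) : ℝ → ℝ → ℝ → ℝ :=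
  fun t x y => tr (F 0 k) f t x y * d2_3 g t x y + tr (F 1 k) f t x y * d3_3 g t x y

/-- the full material derivative D_t g = ∂_t g + Σ u_m ∂_m g on ℝ×ℝ³ -/
def Dt4 (u : Fin 3 → ℝ → ℝ → ℝ → ℝ → ℝ) (g : ℝ → ℝ → ℝ → ℝ → ℝ) : ℝ → ℝ → ℝ → ℝ → ℝ :=
  fun t x y z => d1_4 g t x y z + ∑ m : Fin 3, u m t x y z * dsp m g t x y z

/-- the spatial Laplacian on ℝ×ℝ³ -/
def lap4 (g : ℝ → ℝ → ℝ → ℝ → ℝ) : ℝ → ℝ → ℝ → ℝ → ℝ :=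
  fun t x y z => ∑ k : Fin 3, dsp k (dsp k g) t x y z

abbrev E4 := ℝ × ℝ × ℝ × ℝ

def unc (g : ℝ → ℝ → ℝ → ℝ → ℝ) : E4 → ℝ := fun q => g q.1 q.2.1 q.2.2.1 q.2.2.2

def pd (v : E4) (g : ℝ → ℝ → ℝ → ℝ → ℝ) : ℝ → ℝ → ℝ → ℝ → ℝ :=
  fun a b c e => fderiv ℝ (unc g) (a, b, c, e) v

lemma smooth4_unc {g} (hg : smooth4 g) : ContDiff ℝ (⊤ : ℕ∞) (unc g) := hg

lemma smooth4_pd {g} (hg : smooth4 g) (v : E4) : smooth4 (pd v g) := by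
  have h1 : ContDiff ℝ (⊤ : ℕ∞) (fderiv ℝ (unc g)) :=
    (smooth4_unc hg).fderiv_right (by exact_mod_cast le_top)
  exact h1.clm_apply contDiff_const

lemma smooth4_diff {g} (hg : smooth4 g) : Differentiable ℝ (unc g) :=
  (smooth4_unc hg).differentiable (by simp)

lemma smooth4_add {g h} (hg : smooth4 g) (hh : smooth4 h) :
    smooth4 (fun a b c e => g a b c e + h a b c e) :=
  ContDiff.add hg hh

lemma smooth4_mul {g h} (hg : smooth4 g) (hh : smooth4 h) :
    smooth4 (fun a b c e => g a b c e * h a b c e) :=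
  ContDiff.mul hg hh

lemma smooth4_sum {G : Fin 3 → ℝ → ℝ → ℝ → ℝ → ℝ} (hG : ∀ j, smooth4 (G j)) :
    smooth4 (fun a b c e => ∑ j : Fin 3, G j a b c e) :=
  ContDiff.sum (fun j _ => hG j)

lemma pd_add {g h} (hg : smooth4 g) (hh : smooth4 h) (v : E4) :
    pd v (fun a b c e => g a b c e + h a b c e)
      = fun a b c e => pd v g a b c e + pd v h a b c e := by
  funext a b c e
  have h0 : unc (fun a b c e => g a b c e + h a b c e) = fun q => unc g q + unc h q := rfl
  simp only [pd, h0]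
  rw [fderiv_fun_add ((smooth4_diff hg) _) ((smooth4_diff hh) _)]
  rfl

lemma pd_mul {g h} (hg : smooth4 g) (hh : smooth4 h) (v : E4) :
    pd v (fun a b c e => g a b c e * h a b c e)
      = fun a b c e => g a b c e * pd v h a b c e + pd v g a b c e * h a b c e := by
  funext a b c e
  have h0 : unc (fun a b c e => g a b c e * h a b c e) = fun q => unc g q * unc h q := rfl
  simp only [pd, h0]
  rw [fderiv_fun_mul ((smooth4_diff hg) _) ((smooth4_diff hh) _)]
  simp [unc, mul_comm]

lemma pd_sum {G : Fin 3 → ℝ → ℝ → ℝ → ℝ → ℝ} (hG : ∀ j, smooth4 (G j)) (v : E4) :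
    pd v (fun a b c e => ∑ j : Fin 3, G j a b c e)
      = fun a b c e => ∑ j : Fin 3, pd v (G j) a b c e := by
  funext a b c e
  have h0 : unc (fun a b c e => ∑ j : Fin 3, G j a b c e)
      = fun q => ∑ j : Fin 3, unc (G j) q := rfl
  simp only [pd, h0]
  rw [fderiv_fun_sum (fun j _ => (smooth4_diff (hG j)) _)]
  simp

lemma pd_comm {g} (hg : smooth4 g) (v w : E4) :
    pd v (pd w g) = pd w (pd v g) := by
  have hd2 : ContDiff ℝ (⊤ : ℕ∞) (fderiv ℝ (unc g)) :=
    (smooth4_unc hg).fderiv_right (by exact_mod_cast le_top)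
  have key : ∀ (v w : E4) (q : E4),
      fderiv ℝ (unc (pd w g)) q v = fderiv ℝ (fderiv ℝ (unc g)) q v w := by
    intro v w q
    have hcomp : unc (pd w g) = (ContinuousLinearMap.apply ℝ ℝ w) ∘ (fderiv ℝ (unc g)) := rfl
    rw [hcomp]
    have h1 : HasFDerivAt ((ContinuousLinearMap.apply ℝ ℝ w) ∘ (fderiv ℝ (unc g)))
        ((ContinuousLinearMap.apply ℝ ℝ w).comp (fderiv ℝ (fderiv ℝ (unc g)) q)) q :=
      (ContinuousLinearMap.apply ℝ ℝ w).hasFDerivAt.comp q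
        ((hd2.differentiable (by simp)) q).hasFDerivAt
    rw [h1.fderiv]
    rfl
  funext a b c e
  have hsym : IsSymmSndFDerivAt ℝ (unc g) (a, b, c, e) :=
    (smooth4_unc hg).contDiffAt.isSymmSndFDerivAt (by
      have : ((2:ℕ∞) : WithTop ℕ∞) ≤ ((⊤:ℕ∞) : WithTop ℕ∞) := WithTop.coe_le_coe.mpr le_top
      simpa using this)
  show fderiv ℝ (unc (pd w g)) (a,b,c,e) v = fderiv ℝ (unc (pd v g)) (a,b,c,e) w
  rw [key v w, key w v]
  exact hsym v w

/-- spatial basis directions -/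
def spv : Fin 3 → E4 := ![(0,1,0,0), (0,0,1,0), (0,0,0,1)]
def etv : E4 := (1,0,0,0)

lemma d1_4_pd {g} (hg : smooth4 g) : d1_4 g = pd etv g := by
  funext a b c e
  have hL : HasDerivAt (fun s : ℝ => ((s, b, c, e) : E4)) etv a :=
    HasDerivAt.prodMk (hasDerivAt_id a) (hasDerivAt_const a ((b, c, e) : ℝ × ℝ × ℝ))
  exact (((smooth4_diff hg) ((a, b, c, e) : E4)).hasFDerivAt.comp_hasDerivAt a hL).deriv

lemma d2_4_pd {g} (hg : smooth4 g) : d2_4 g = pd (spv 0) g := by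
  funext a b c e
  have hL : HasDerivAt (fun s : ℝ => ((a, s, c, e) : E4)) (spv 0) b :=
    HasDerivAt.prodMk (hasDerivAt_const b a) (HasDerivAt.prodMk (hasDerivAt_id b) (hasDerivAt_const b ((c, e) : ℝ × ℝ)))
  exact (((smooth4_diff hg) ((a, b, c, e) : E4)).hasFDerivAt.comp_hasDerivAt b hL).deriv

lemma d3_4_pd {g} (hg : smooth4 g) : d3_4 g = pd (spv 1) g := by
  funext a b c e
  have hL : HasDerivAt (fun s : ℝ => ((a, b, s, e) : E4)) (spv 1) c :=
    HasDerivAt.prodMk (hasDerivAt_const c a) (HasDerivAt.prodMk (hasDerivAt_const c b)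
      (HasDerivAt.prodMk (hasDerivAt_id c) (hasDerivAt_const c e)))
  exact (((smooth4_diff hg) ((a, b, c, e) : E4)).hasFDerivAt.comp_hasDerivAt c hL).deriv

lemma d4_4_pd {g} (hg : smooth4 g) : d4_4 g = pd (spv 2) g := by
  funext a b c e
  have hL : HasDerivAt (fun s : ℝ => ((a, b, c, s) : E4)) (spv 2) e :=
    HasDerivAt.prodMk (hasDerivAt_const e a) (HasDerivAt.prodMk (hasDerivAt_const e b)
      (HasDerivAt.prodMk (hasDerivAt_const e c) (hasDerivAt_id e)))
  exact (((smooth4_diff hg) ((a, b, c, e) : E4)).hasFDerivAt.comp_hasDerivAt e hL).deriv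

lemma dsp_pd {g} (hg : smooth4 g) : ∀ m : Fin 3, dsp m g = pd (spv m) g := by
  intro m
  fin_cases m
  · exact d2_4_pd hg
  · exact d3_4_pd hg
  · exact d4_4_pd hg

/-- material derivative written with `pd` -/
def Dg (u : Fin 3 → ℝ → ℝ → ℝ → ℝ → ℝ) (g : ℝ → ℝ → ℝ → ℝ → ℝ) : ℝ → ℝ → ℝ → ℝ → ℝ :=
  fun t x y z => pd etv g t x y z + ∑ m : Fin 3, u m t x y z * pd (spv m) g t x y z

lemma Dt4_eq_Dg (u : Fin 3 → ℝ → ℝ → ℝ → ℝ → ℝ) {g} (hg : smooth4 g) :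
    Dt4 u g = Dg u g := by
  funext t x y z
  simp only [Dt4, Dg, d1_4_pd hg, dsp_pd hg]

lemma smooth4_Dg {u : Fin 3 → ℝ → ℝ → ℝ → ℝ → ℝ} (hu : ∀ m, smooth4 (u m)) {g}
    (hg : smooth4 g) : smooth4 (Dg u g) := by
  have : smooth4 (fun a b c e => pd etv g a b c e
      + ∑ m : Fin 3, (fun a b c e => u m a b c e * pd (spv m) g a b c e) a b c e) :=
    smooth4_add (smooth4_pd hg etv)
      (smooth4_sum (fun m => smooth4_mul (hu m) (smooth4_pd hg (spv m))))
  exact this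

lemma Dg_add {u : Fin 3 → ℝ → ℝ → ℝ → ℝ → ℝ} {g h} (hg : smooth4 g) (hh : smooth4 h) :
    Dg u (fun a b c e => g a b c e + h a b c e)
      = fun t x y z => Dg u g t x y z + Dg u h t x y z := by
  funext t x y z
  simp only [Dg, pd_add hg hh]
  simp only [Fin.sum_univ_three]
  ring

lemma Dg_mul {u : Fin 3 → ℝ → ℝ → ℝ → ℝ → ℝ} {g h} (hg : smooth4 g) (hh : smooth4 h) :
    Dg u (fun a b c e => g a b c e * h a b c e)
      = fun t x y z => g t x y z * Dg u h t x y z + Dg u g t x y z * h t x y z := by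
  funext t x y z
  simp only [Dg, pd_mul hg hh]
  simp only [Fin.sum_univ_three]
  ring

lemma Dg_sum {u : Fin 3 → ℝ → ℝ → ℝ → ℝ → ℝ} {G : Fin 3 → ℝ → ℝ → ℝ → ℝ → ℝ}
    (hG : ∀ j, smooth4 (G j)) :
    Dg u (fun a b c e => ∑ j : Fin 3, G j a b c e)
      = fun t x y z => ∑ j : Fin 3, Dg u (G j) t x y z := by
  funext t x y z
  simp only [Dg, pd_sum hG]
  simp only [Fin.sum_univ_three]
  ring

lemma Dg_comm {u : Fin 3 → ℝ → ℝ → ℝ → ℝ → ℝ} (hu : ∀ m, smooth4 (u m)) {g}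
    (hg : smooth4 g) (m : Fin 3) :
    Dg u (pd (spv m) g)
      = fun t x y z => pd (spv m) (Dg u g) t x y z
          - ∑ k : Fin 3, pd (spv m) (u k) t x y z * pd (spv k) g t x y z := by
  have h0 : Dg u g = fun a b c e => pd etv g a b c e
      + (fun a b c e => ∑ k : Fin 3,
          (fun a b c e => u k a b c e * pd (spv k) g a b c e) a b c e) a b c e := rfl
  funext t x y z
  rw [h0, pd_add (smooth4_pd hg etv)
    (smooth4_sum (fun k => smooth4_mul (hu k) (smooth4_pd hg (spv k)))),
    pd_sum (fun k => smooth4_mul (hu k) (smooth4_pd hg (spv k)))]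
  simp only [pd_mul (hu _) (smooth4_pd hg _)]
  have h1 : ∀ v, pd v (pd (spv m) g) = pd (spv m) (pd v g) := fun v => pd_comm hg _ _
  simp only [Dg, h1]
  simp only [Fin.sum_univ_three]
  ring

/-- the second material derivative of the velocity:
D_t² u_i + D_t ∂_i p = Σ_j F_j·∇(F_j·∇u_i). -/
theorem second_material_derivative_velocity
    (u : Fin 3 → ℝ → ℝ → ℝ → ℝ → ℝ) (p : ℝ → ℝ → ℝ → ℝ → ℝ)
    (F : Fin 3 → Fin 3 → ℝ → ℝ → ℝ → ℝ → ℝ)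
    (hu : ∀ i, smooth4 (u i)) (hp : smooth4 p) (hF : ∀ i j, smooth4 (F i j))
    (hmom : ∀ i : Fin 3, ∀ t x y z,
      d1_4 (u i) t x y z + (∑ m : Fin 3, u m t x y z * dsp m (u i) t x y z)
        + dsp i p t x y z
        = ∑ j : Fin 3, ∑ m : Fin 3, F m j t x y z * dsp m (F i j) t x y z)
    (hdef : ∀ i j : Fin 3, ∀ t x y z,
      d1_4 (F i j) t x y z + ∑ m : Fin 3, u m t x y z * dsp m (F i j) t x y z
        = ∑ m : Fin 3, F m j t x y z * dsp m (u i) t x y z) :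
    ∀ i : Fin 3, ∀ t x y z,
      Dt4 u (Dt4 u (u i)) t x y z + Dt4 u (dsp i p) t x y z
        = ∑ j : Fin 3, ∑ m : Fin 3,
            F m j t x y z
              * dsp m (fun a b c e => ∑ k : Fin 3, F k j a b c e * dsp k (u i) a b c e)
                  t x y z := by
  intro i t x y z
  have sDgu : smooth4 (Dg u (u i)) := smooth4_Dg hu (hu i)
  have sPp : smooth4 (pd (spv i) p) := smooth4_pd hp (spv i)
  have hmom' : (fun a b c e => Dg u (u i) a b c e + pd (spv i) p a b c e)
      = fun a b c e => ∑ j : Fin 3, ∑ m : Fin 3,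
          F m j a b c e * pd (spv m) (F i j) a b c e := by
    funext a b c e
    have h1 := hmom i a b c e
    have e4 : ∀ j m : Fin 3, dsp m (F i j) = pd (spv m) (F i j) := fun j m => dsp_pd (hF i j) m
    have e2u : ∀ m : Fin 3, dsp m (u i) = pd (spv m) (u i) := dsp_pd (hu i)
    have e3p : ∀ m : Fin 3, dsp m p = pd (spv m) p := dsp_pd hp
    simp only [d1_4_pd (hu i), e2u, e3p, e4] at h1
    exact h1
  have hdef' : ∀ r j : Fin 3, Dg u (F r j)
      = fun a b c e => ∑ m : Fin 3, F m j a b c e * pd (spv m) (u r) a b c e := by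
    intro r j
    funext a b c e
    have h1 := hdef r j a b c e
    have eA : ∀ m : Fin 3, dsp m (F r j) = pd (spv m) (F r j) := dsp_pd (hF r j)
    have eB : ∀ m : Fin 3, dsp m (u r) = pd (spv m) (u r) := dsp_pd (hu r)
    simp only [d1_4_pd (hF r j), eA, eB] at h1
    exact h1
  have hA : Dt4 u (Dt4 u (u i)) = Dg u (Dg u (u i)) := by
    rw [Dt4_eq_Dg u (hu i), Dt4_eq_Dg u sDgu]
  have hB : Dt4 u (dsp i p) = Dg u (pd (spv i) p) := by
    rw [dsp_pd hp i, Dt4_eq_Dg u sPp]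
  rw [hA, hB]
  -- rewrite the RHS in terms of pd
  have eRin : ∀ k : Fin 3, dsp k (u i) = pd (spv k) (u i) := dsp_pd (hu i)
  simp only [eRin]
  have sInner : ∀ j : Fin 3,
      smooth4 (fun a b c e => ∑ k : Fin 3, F k j a b c e * pd (spv k) (u i) a b c e) :=
    fun j => smooth4_sum (fun k => smooth4_mul (hF k j) (smooth4_pd (hu i) (spv k)))
  have eRout : ∀ j m : Fin 3,
      dsp m (fun a b c e => ∑ k : Fin 3, F k j a b c e * pd (spv k) (u i) a b c e)
        = pd (spv m) (fun a b c e => ∑ k : Fin 3, F k j a b c e * pd (spv k) (u i) a b c e) :=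
    fun j m => dsp_pd (sInner j) m
  simp only [eRout]
  -- combine the two material derivatives and use the momentum equation
  have hsum : Dg u (Dg u (u i)) t x y z + Dg u (pd (spv i) p) t x y z
      = Dg u (fun a b c e => Dg u (u i) a b c e + pd (spv i) p a b c e) t x y z := by
    rw [Dg_add sDgu sPp]
  rw [hsum, hmom']
  -- expand the material derivative of the right-hand side
  have hGsm : ∀ j : Fin 3,
      smooth4 (fun a b c e => ∑ m : Fin 3, F m j a b c e * pd (spv m) (F i j) a b c e) :=
    fun j => smooth4_sum (fun m => smooth4_mul (hF m j) (smooth4_pd (hF i j) (spv m)))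
  have step1 : Dg u (fun a b c e => ∑ j : Fin 3, ∑ m : Fin 3,
        F m j a b c e * pd (spv m) (F i j) a b c e)
      = fun t x y z => ∑ j : Fin 3,
          Dg u (fun a b c e => ∑ m : Fin 3,
            F m j a b c e * pd (spv m) (F i j) a b c e) t x y z := Dg_sum hGsm
  rw [step1]
  have step2 : ∀ j : Fin 3,
      Dg u (fun a b c e => ∑ m : Fin 3, F m j a b c e * pd (spv m) (F i j) a b c e)
        = fun t x y z => ∑ m : Fin 3,
            Dg u (fun a b c e => F m j a b c e * pd (spv m) (F i j) a b c e) t x y z :=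
    fun j => Dg_sum (fun m => smooth4_mul (hF m j) (smooth4_pd (hF i j) (spv m)))
  simp only [step2]
  have step3 : ∀ j m : Fin 3,
      Dg u (fun a b c e => F m j a b c e * pd (spv m) (F i j) a b c e)
        = fun t x y z => F m j t x y z * Dg u (pd (spv m) (F i j)) t x y z
            + Dg u (F m j) t x y z * pd (spv m) (F i j) t x y z :=
    fun j m => Dg_mul (hF m j) (smooth4_pd (hF i j) (spv m))
  simp only [step3]
  have step4 : ∀ j m : Fin 3,
      Dg u (pd (spv m) (F i j))
        = fun t x y z => pd (spv m) (Dg u (F i j)) t x y z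
            - ∑ k : Fin 3, pd (spv m) (u k) t x y z * pd (spv k) (F i j) t x y z :=
    fun j m => Dg_comm hu (hF i j) m
  simp only [step4, hdef']
  simp only [Fin.sum_univ_three]
  ring
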